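/- Consider the randomized greedy freezing procedure with parameter p′ ∈ (0,1) in the CSP setting. Let T ⊆ 𝒞 be a collection of constraints such that vbl(C) ∩ vbl(C′) = ∅ for all distinct C, C′ ∈ T. For h ∈ {0,1,…,n}, let ι(h) denote the number of variables among v₁,…,v_h assigned a value by the procedure, let 𝔖(h) be the σ-algebra generated by the procedure's output restricted to the variables v₁,…,v_h, and set M_h = ∏_{C∈T} ℙ[C | P_{ι(h)}]. Then for every h ∈ {0,1,…,n−1}, E_ν[M_{h+1} | 𝔖(h)] = M_h; that is, (M_h) is a martingale with respect to (𝔖(h)). -/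

import Mathlib

open Finset
open scoped Classical

/-! ## The CSP setting

A constraint satisfaction problem has variables `Fin n`, each taking values in `Fin q`
(the uniform product measure `ℙ` makes the variables independent and uniform), and
constraints `Fin m`; constraint `j` depends only on the variables in `vbl j`, and
`viol j σ` means that the assignment `σ` violates constraint `j`. -/

/-- A full assignment `σ` is compatible with (extends) the partial assignment `X`. -/
def Compat {n q : ℕ} (X : Fin n → Option (Fin q)) (σ : Fin n → Fin q) : Prop :=
  ∀ v a, X v = some a → σ v = a

/-- `condP viol j X` is the conditional probability `ℙ[C_j | X]` that constraint `j` is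
violated, under the uniform product measure conditioned on agreeing with the partial
assignment `X`. -/
noncomputable def condP {n q m : ℕ} (viol : Fin m → (Fin n → Fin q) → Prop)
    (j : Fin m) (X : Fin n → Option (Fin q)) : ℝ :=
  ((Finset.univ.filter fun σ : Fin n → Fin q => Compat X σ ∧ viol j σ).card : ℝ) /
    ((Finset.univ.filter fun σ : Fin n → Fin q => Compat X σ).card : ℝ)

/-- One step of the greedy freezing procedure, processing variable `i`, where the random
seed `ω` prescribes the value a variable receives when it is assigned. The state is a pair
(partial assignment, set of frozen variables). If `i` is frozen it is skipped; otherwise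
`i` is assigned the value `ω i`, and every still-unassigned variable lying in a constraint
that has become dangerous (conditional probability of violation exceeding `p'`) is frozen. -/
noncomputable def greedyStep {n q m : ℕ} (vbl : Fin m → Finset (Fin n))
    (viol : Fin m → (Fin n → Fin q) → Prop) (p' : ℝ) (ω : Fin n → Fin q)
    (st : (Fin n → Option (Fin q)) × Finset (Fin n)) (i : Fin n) :
    (Fin n → Option (Fin q)) × Finset (Fin n) :=
  if i ∈ st.2 then st
  else
    let X' := Function.update st.1 i (some (ω i))
    (X', st.2 ∪ Finset.univ.filter fun v =>
      X' v = none ∧ ∃ j, v ∈ vbl j ∧ p' < condP viol j X')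

/-- `greedyRun vbl viol p' ω h` is the state of the greedy freezing procedure with
parameter `p'` and random seed `ω` after the variables `v_1, …, v_h` (i.e. the first `h`
variables in the fixed order) have been processed: since the procedure always selects the
lowest-indexed available variable, processing the variables in index order — skipping
frozen ones — implements the procedure exactly, and the first component of
`greedyRun vbl viol p' ω h` is the partial assignment `P_{ι(h)}`, where `ι(h)` is the
number of variables among `v_1, …, v_h` that have been assigned values.
In particular `greedyRun vbl viol p' ω n` gives the final partial assignment `P_s`, and
as `ω` ranges uniformly over `Fin n → Fin q`, its law is the distribution `ν`. -/
noncomputable def greedyRun {n q m : ℕ} (vbl : Fin m → Finset (Fin n))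
    (viol : Fin m → (Fin n → Fin q) → Prop) (p' : ℝ) (ω : Fin n → Fin q) :
    ℕ → (Fin n → Option (Fin q)) × Finset (Fin n)
  | 0 => (fun _ => none, ∅)
  | h + 1 =>
    if hh : h < n then greedyStep vbl viol p' ω (greedyRun vbl viol p' ω h) ⟨h, hh⟩
    else greedyRun vbl viol p' ω h

/-! If the `(h+1)`-st variable is frozen, `M_{h+1} = M_h`. Otherwise it is assigned a uniform
value `a`, and by disjointness at most one constraint of `T` contains it. Conditioning on a
variable outside `vbl C` leaves `ℙ[C | ·]` unchanged, and for the one constraint that does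
contain it, averaging `ℙ[C | X, v = a]` over `a` is the law of total probability. -/

namespace Finset

variable {ι α : Type*} [DecidableEq ι] [Fintype α] [DecidableEq α]

theorem card_mul_card_filter_apply_eq (s : Finset (ι → α)) (v : ι)
    (hs : ∀ σ ∈ s, ∀ b, Function.update σ v b ∈ s) (a : α) :
    Fintype.card α * #{σ ∈ s | σ v = a} = #s := by
  have slice_eq : ∀ b, #{σ ∈ s | σ v = b} = #{σ ∈ s | σ v = a} := fun b =>
    card_bij' (fun σ _ => Function.update σ v a) (fun σ _ => Function.update σ v b)
      (fun σ hσ => by simp_all) (fun σ hσ => by simp_all)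
      (fun σ hσ => by simp_all [(mem_filter.mp hσ).2 ▸ Function.update_eq_self v σ])
      (fun σ hσ => by simp_all [(mem_filter.mp hσ).2 ▸ Function.update_eq_self v σ])
  rw [card_eq_sum_card_fiberwise (s := s) (f := fun σ => σ v) (t := univ) (fun _ _ => mem_univ _)]
  simp [slice_eq]

end Finset

section Conditioning

variable {n q m : ℕ}

theorem compat_update_iff {X : Fin n → Option (Fin q)} {v : Fin n} (hX : X v = none)
    (a : Fin q) (σ : Fin n → Fin q) :
    Compat (Function.update X v (some a)) σ ↔ Compat X σ ∧ σ v = a := by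
  constructor
  · intro h
    refine ⟨fun w b hw => h w b ?_, h v a (by simp)⟩
    rwa [Function.update_of_ne (by rintro rfl; simp_all)]
  · rintro ⟨hσ, rfl⟩ w b hw
    rcases eq_or_ne w v with rfl | hwv
    · simpa using hw
    · exact hσ w b (by rwa [Function.update_of_ne hwv] at hw)

theorem filter_compat_update {X : Fin n → Option (Fin q)} {v : Fin n} (hX : X v = none)
    (P : (Fin n → Fin q) → Prop) (a : Fin q) :
    (univ.filter fun σ => Compat (Function.update X v (some a)) σ ∧ P σ) =
      (univ.filter fun σ => Compat X σ ∧ P σ).filter (· v = a) := by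
  ext σ
  simp only [mem_filter, mem_univ, true_and, compat_update_iff hX]
  tauto

theorem update_mem_filter_compat {X : Fin n → Option (Fin q)} {v : Fin n} (hX : X v = none)
    {P : (Fin n → Fin q) → Prop} (hP : ∀ σ b, P σ → P (Function.update σ v b))
    (σ : Fin n → Fin q) (hσ : σ ∈ univ.filter fun σ => Compat X σ ∧ P σ) (b : Fin q) :
    Function.update σ v b ∈ univ.filter fun σ => Compat X σ ∧ P σ := by
  simp only [mem_filter, mem_univ, true_and] at hσ ⊢
  refine ⟨fun w c hw => ?_, hP σ b hσ.2⟩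
  rw [Function.update_of_ne (by rintro rfl; simp_all)]
  exact hσ.1 w c hw

/-- Fixing the unassigned variable `v` to `a` keeps a `1/q` fraction of the compatible
assignments, so only the numerator of `ℙ[C_j | X, v = a]` depends on `a`. -/
theorem condP_update_eq (hq : 0 < q) (viol : Fin m → (Fin n → Fin q) → Prop) (j : Fin m)
    {X : Fin n → Option (Fin q)} {v : Fin n} (hX : X v = none) (a : Fin q) :
    condP viol j (Function.update X v (some a)) =
      q * #((univ.filter fun σ => Compat X σ ∧ viol j σ).filter (· v = a)) /
        #(univ.filter fun σ => Compat X σ) := by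
  have hden := card_mul_card_filter_apply_eq _ v
    (update_mem_filter_compat (P := fun _ => True) hX (fun _ _ _ => trivial)) a
  simp only [and_true, Fintype.card_fin] at hden
  have hden' : (#(univ.filter fun σ => Compat (Function.update X v (some a)) σ) : ℝ) =
      #(univ.filter fun σ => Compat X σ) / q := by
    have := filter_compat_update hX (fun _ => True) a
    simp only [and_true] at this
    rw [this, eq_div_iff (by positivity), ← hden]
    push_cast
    ring
  rw [condP, filter_compat_update hX, hden', div_div_eq_mul_div, mul_comm]

theorem condP_update_of_notMem (hq : 0 < q) (vbl : Fin m → Finset (Fin n))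
    (viol : Fin m → (Fin n → Fin q) → Prop)
    (hdep : ∀ j (σ τ : Fin n → Fin q), (∀ v ∈ vbl j, σ v = τ v) → (viol j σ ↔ viol j τ))
    {j : Fin m} {X : Fin n → Option (Fin q)} {v : Fin n} (hX : X v = none)
    (hv : v ∉ vbl j) (a : Fin q) :
    condP viol j (Function.update X v (some a)) = condP viol j X := by
  have viol_update : ∀ σ b, viol j σ → viol j (Function.update σ v b) := fun σ b hσ =>
    (hdep j σ _ fun w hw => (Function.update_of_ne (ne_of_mem_of_not_mem hw hv) b σ).symm).mp hσ
  have hnum := card_mul_card_filter_apply_eq _ v (update_mem_filter_compat hX viol_update) a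
  rw [Fintype.card_fin] at hnum
  rw [condP_update_eq hq viol j hX, condP, ← hnum]
  push_cast
  rfl

theorem sum_condP_update (hq : 0 < q) (viol : Fin m → (Fin n → Fin q) → Prop) (j : Fin m)
    {X : Fin n → Option (Fin q)} {v : Fin n} (hX : X v = none) :
    ∑ a : Fin q, condP viol j (Function.update X v (some a)) = q * condP viol j X := by
  simp_rw [condP_update_eq hq viol j hX]
  rw [← sum_div, ← mul_sum, ← Nat.cast_sum,
    ← card_eq_sum_card_fiberwise (s := univ.filter fun σ => Compat X σ ∧ viol j σ)
      (f := fun σ => σ v) (fun _ _ => mem_univ _), condP, mul_div_assoc]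

theorem sum_prod_condP_update (hq : 0 < q) (vbl : Fin m → Finset (Fin n))
    (viol : Fin m → (Fin n → Fin q) → Prop)
    (hdep : ∀ j (σ τ : Fin n → Fin q), (∀ v ∈ vbl j, σ v = τ v) → (viol j σ ↔ viol j τ))
    (T : Finset (Fin m)) (hT : ∀ C ∈ T, ∀ C' ∈ T, C ≠ C' → Disjoint (vbl C) (vbl C'))
    {X : Fin n → Option (Fin q)} {v : Fin n} (hX : X v = none) :
    ∑ a : Fin q, ∏ C ∈ T, condP viol C (Function.update X v (some a)) =
      q * ∏ C ∈ T, condP viol C X := by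
  by_cases hv : ∃ C₀ ∈ T, v ∈ vbl C₀
  · obtain ⟨C₀, hC₀, hvC₀⟩ := hv
    have hv_other : ∀ C ∈ T.erase C₀, v ∉ vbl C := fun C hC hvC =>
      disjoint_left.mp (hT C (mem_of_mem_erase hC) C₀ hC₀ (ne_of_mem_erase hC)) hvC hvC₀
    calc ∑ a : Fin q, ∏ C ∈ T, condP viol C (Function.update X v (some a))
        = ∑ a : Fin q, condP viol C₀ (Function.update X v (some a)) *
            ∏ C ∈ T.erase C₀, condP viol C X := by
          refine sum_congr rfl fun a _ => ?_
          rw [← mul_prod_erase T _ hC₀]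
          exact congrArg _ (prod_congr rfl fun C hC =>
            condP_update_of_notMem hq vbl viol hdep hX (hv_other C hC) a)
      _ = q * ∏ C ∈ T, condP viol C X := by
          rw [← sum_mul, sum_condP_update hq viol C₀ hX, mul_assoc,
            mul_prod_erase T (fun C => condP viol C X) hC₀]
  · push Not at hv
    simp [prod_congr rfl fun C hC => condP_update_of_notMem hq vbl viol hdep hX (hv C hC) _]

end Conditioning

section Greedy

variable {n q m : ℕ} (vbl : Fin m → Finset (Fin n)) (viol : Fin m → (Fin n → Fin q) → Prop)
  (p' : ℝ)

theorem greedyRun_congr {ω ω' : Fin n → Fin q} {h : ℕ}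
    (hω : ∀ i : Fin n, (i : ℕ) < h → ω i = ω' i) :
    greedyRun vbl viol p' ω h = greedyRun vbl viol p' ω' h := by
  induction h with
  | zero => rfl
  | succ k ih =>
    rw [greedyRun, greedyRun, ih fun i hi => hω i (Nat.lt_succ_of_lt hi)]
    split_ifs with hk
    · simp only [greedyStep, hω ⟨k, hk⟩ (Nat.lt_succ_self k)]
    · rfl

theorem greedyRun_fst_eq_none (ω : Fin n → Fin q) {h : ℕ} {v : Fin n} (hv : h ≤ v) :
    (greedyRun vbl viol p' ω h).1 v = none := by
  induction h with
  | zero => rfl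
  | succ k ih =>
    have hvk : v ≠ ⟨k, by omega⟩ := Fin.ne_of_val_ne (show (v : ℕ) ≠ k by omega)
    rw [greedyRun]
    split_ifs with hk
    · unfold greedyStep
      split_ifs
      · exact ih (by omega)
      · simpa [Function.update_of_ne hvk] using ih (by omega)
    · exact ih (by omega)

theorem greedyRun_succ_update_fst (ω : Fin n → Fin q) {h : ℕ} (hh : h < n) (a : Fin q) :
    (greedyRun vbl viol p' (Function.update ω ⟨h, hh⟩ a) (h + 1)).1 =
      if ⟨h, hh⟩ ∈ (greedyRun vbl viol p' ω h).2 then (greedyRun vbl viol p' ω h).1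
      else Function.update (greedyRun vbl viol p' ω h).1 ⟨h, hh⟩ (some a) := by
  rw [greedyRun, dif_pos hh, greedyRun_congr vbl viol p' (ω' := ω) fun i hi =>
    Function.update_of_ne (Fin.ne_of_val_ne hi.ne) a ω]
  unfold greedyStep
  split_ifs <;> simp

end Greedy

/-- `E_ν[M_{h+1} | 𝔖(h)] = M_h` is stated pointwise: `𝔖(h)` is generated by the values the
seed gives to the first `h` variables, and `M_{h+1}` depends on the seed only through these and
the value `a` of the `(h+1)`-st variable, so the conditional expectation averages over `a`. -/
theorem greedy_martingale_general {n q m : ℕ} (hq : 0 < q)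
    (vbl : Fin m → Finset (Fin n)) (viol : Fin m → (Fin n → Fin q) → Prop)
    (hdep : ∀ j (σ τ : Fin n → Fin q), (∀ v ∈ vbl j, σ v = τ v) → (viol j σ ↔ viol j τ))
    (p' : ℝ)
    (T : Finset (Fin m))
    (hT : ∀ C ∈ T, ∀ C' ∈ T, C ≠ C' → Disjoint (vbl C) (vbl C'))
    (h : ℕ) (hh : h < n) (ω : Fin n → Fin q) :
    (∑ a : Fin q, ∏ C ∈ T,
        condP viol C (greedyRun vbl viol p' (Function.update ω ⟨h, hh⟩ a) (h + 1)).1) / q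
      = ∏ C ∈ T, condP viol C (greedyRun vbl viol p' ω h).1 := by
  have hq' : (q : ℝ) ≠ 0 := by positivity
  simp_rw [greedyRun_succ_update_fst]
  split_ifs with hfrozen
  · simp [hq']
  · rw [sum_prod_condP_update hq vbl viol hdep T hT
      (greedyRun_fst_eq_none vbl viol p' ω (v := ⟨h, hh⟩) le_rfl), mul_div_cancel_left₀ _ hq']

/-- **Martingale property of the greedy freezing procedure.**
Let `T` be a collection of constraints with pairwise disjoint variable sets, and let
`M_h(ω) = ∏_{C ∈ T} ℙ[C | P_{ι(h)}]`, where `P_{ι(h)} = (greedyRun vbl viol p' ω h).1` is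
the partial assignment of the procedure after the variables `v_1, …, v_h` have been
processed. Then `E_ν[M_{h+1} | 𝔖(h)] = M_h`: since `M_h` depends only on the random values
given to the first `h` variables and the σ-algebra `𝔖(h)` generated by the output of the
procedure on `v_1, …, v_h` is generated by these values, the conditional expectation
identity amounts to the statement that, for every seed `ω`, averaging `M_{h+1}` over the
`q` possible values of the `(h+1)`-st variable yields `M_h(ω)`. -/
theorem greedy_martingale {n q m : ℕ} (hq : 0 < q)
    (vbl : Fin m → Finset (Fin n)) (viol : Fin m → (Fin n → Fin q) → Prop)
    (hdep : ∀ j (σ τ : Fin n → Fin q), (∀ v ∈ vbl j, σ v = τ v) → (viol j σ ↔ viol j τ))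
    (p' : ℝ) (hp' : p' ∈ Set.Ioo (0 : ℝ) 1)
    (T : Finset (Fin m))
    (hT : ∀ C ∈ T, ∀ C' ∈ T, C ≠ C' → Disjoint (vbl C) (vbl C'))
    (h : ℕ) (hh : h < n) (ω : Fin n → Fin q) :
    (∑ a : Fin q, ∏ C ∈ T,
        condP viol C (greedyRun vbl viol p' (Function.update ω ⟨h, hh⟩ a) (h + 1)).1) / q
      = ∏ C ∈ T, condP viol C (greedyRun vbl viol p' ω h).1 :=
  greedy_martingale_general hq vbl viol hdep p' T hT h hh ω
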